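/- Let λ' be a disjoint layout of n unit squares that preserves the orthogonal order of an initial layout, with bounding-box width at most w + ε and height at most h + ε, where w, h are positive integers and 0 < ε < 1/2. Then there is a set of axis-parallel lines, with at most w − 1 vertical lines and at most h − 1 horizontal lines, hitting every segment between pairs of distinct square centers of the initial layout. -/
import Mathlib


open scoped Classical

/-- An axis-parallel line in the plane: `vert a` is the line `x = a`,
`horiz b` is the line `y = b`. -/
inductive ALine where
  | vert : ℝ → ALine
  | horiz : ℝ → ALine

/-- `a` lies strictly between `u` and `v`. -/
def strictBetween (a u v : ℝ) : Prop := (u < a ∧ a < v) ∨ (v < a ∧ a < u)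

/-- An axis-parallel line hits the segment joining `p` and `q` iff it meets the
relative interior of the segment but neither endpoint. -/
def ALine.hits : ALine → ℝ × ℝ → ℝ × ℝ → Prop
  | .vert a, p, q => strictBetween a p.1 q.1
  | .horiz b, p, q => strictBetween b p.2 q.2

/-- The line contains the point `p`. -/
def ALine.containsPt : ALine → ℝ × ℝ → Prop
  | .vert a, p => p.1 = a
  | .horiz b, p => p.2 = b

/-- The line is vertical. -/
def ALine.isVert : ALine → Prop
  | .vert _ => True
  | .horiz _ => False

/-- The line is horizontal. -/
def ALine.isHoriz : ALine → Prop
  | .vert _ => False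
  | .horiz _ => True

/-- Two layouts (assignments of centers to the items indexed by `ι`) have the
same orthogonal order. -/
def orthOrder {ι : Type*} (f g : ι → ℝ × ℝ) : Prop :=
  ∀ i j : ι,
    ((f i).1 < (f j).1 ↔ (g i).1 < (g j).1) ∧
    ((f i).1 = (f j).1 ↔ (g i).1 = (g j).1) ∧
    ((f i).2 < (f j).2 ↔ (g i).2 < (g j).2) ∧
    ((f i).2 = (f j).2 ↔ (g i).2 = (g j).2)

/-- A layout of unit squares is disjoint iff any two distinct centers are at
distance at least 1 in the `x`- or the `y`-coordinate. -/
def disjointUnitLayout {ι : Type*} (f : ι → ℝ × ℝ) : Prop :=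
  ∀ i j : ι, i ≠ j → 1 ≤ |(f i).1 - (f j).1| ∨ 1 ≤ |(f i).2 - (f j).2|

/-- Width of the bounding box of a layout of unit squares. -/
noncomputable def unitWidth {n : ℕ} (f : Fin n → ℝ × ℝ) : ℝ :=
  (⨆ i, (f i).1) - (⨅ i, (f i).1) + 1

/-- Height of the bounding box of a layout of unit squares. -/
noncomputable def unitHeight {n : ℕ} (f : Fin n → ℝ × ℝ) : ℝ :=
  (⨆ i, (f i).2) - (⨅ i, (f i).2) + 1

/-- a disjoint orthogonal-order preserving layout of unit squares
of width at most `w + ε` and height at most `h + ε` (`w, h` positive integers,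
`0 < ε < 1/2`) yields a hitting set with at most `w - 1` vertical and `h - 1`
horizontal lines for all segments between distinct centers of the initial
layout. -/
theorem oneDim {n : ℕ} (hn : 0 < n) (u v : Fin n → ℝ)
    (hord : ∀ i j, u i < u j → v i < v j)
    (w : ℕ) (ε : ℝ) (hε : ε < 1/2)
    (hW : (⨆ i, u i) - (⨅ i, u i) + 1 ≤ (w : ℝ) + ε) :
    ∃ S : Finset ℝ, S.card ≤ w - 1 ∧
      ∀ i j, 1 ≤ |u i - u j| → ∃ a ∈ S, strictBetween a (v i) (v j) := by
  haveI : Nonempty (Fin n) := ⟨⟨0, hn⟩⟩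
  classical
  set m : ℝ := ⨅ i, u i with hm
  have hbdd : BddAbove (Set.range u) := (Set.finite_range u).bddAbove
  have hbddb : BddBelow (Set.range u) := (Set.finite_range u).bddBelow
  have hmle : ∀ i, m ≤ u i := fun i => ciInf_le hbddb i
  have hleM : ∀ i, u i ≤ ⨆ i, u i := fun i => le_ciSup hbdd i
  set A : ℕ → Finset (Fin n) :=
    fun k => Finset.univ.filter (fun i => u i < m + k - 1/2) with hA
  set B : ℕ → Finset (Fin n) :=
    fun k => Finset.univ.filter (fun i => ¬ (u i < m + k - 1/2)) with hB
  have key : ∀ k : ℕ, ∀ i ∈ A k, ∀ j ∈ B k, v i < v j := by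
    intro k i hi j hj
    simp only [hA, hB, Finset.mem_filter] at hi hj
    exact hord i j (by push_neg at hj; linarith [hi.2, hj.2])
  set a : ℕ → ℝ := fun k =>
    if hk : (A k).Nonempty ∧ (B k).Nonempty
    then (((A k).sup' hk.1 v) + ((B k).inf' hk.2 v)) / 2 else 0 with ha
  have main : ∀ i j, u i + 1 ≤ u j →
      ∃ k ∈ Finset.Icc 1 (w - 1), v i < a k ∧ a k < v j := by
    intro i j hij
    set c : ℝ := u i - m with hc
    have hc0 : 0 ≤ c := sub_nonneg.2 (hmle i)
    set K : ℤ := ⌊c + 3/2⌋ with hK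
    have hK1 : 1 ≤ K := Int.le_floor.2 (by push_cast; linarith)
    have hKt : (K : ℝ) ≤ c + 3/2 := Int.floor_le _
    have hKgt : c + 1/2 < K := by
      have := Int.lt_floor_add_one (c + 3/2); linarith
    have hMj : u j ≤ m + w + ε - 1 := by
      have h1 := hleM j; linarith
    have hKw : K ≤ (w : ℤ) - 1 := by
      have h1 : (K : ℝ) < w := by linarith
      have : K < (w : ℤ) := by exact_mod_cast h1
      omega
    set k : ℕ := K.toNat with hk
    have hkK : (k : ℤ) = K := Int.toNat_of_nonneg (by omega)
    have hkR : (k : ℝ) = (K : ℝ) := by exact_mod_cast hkK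
    have hk1 : 1 ≤ k := by omega
    have hkw : k ≤ w - 1 := by omega
    have hiA : i ∈ A k := by
      simp only [hA, Finset.mem_filter, Finset.mem_univ, true_and]
      rw [hkR]; linarith
    have hjB : j ∈ B k := by
      simp only [hB, Finset.mem_filter, Finset.mem_univ, true_and]
      rw [hkR]; push_neg; linarith
    have hne : (A k).Nonempty ∧ (B k).Nonempty := ⟨⟨i, hiA⟩, ⟨j, hjB⟩⟩
    have hsup : (A k).sup' hne.1 v < (B k).inf' hne.2 v := by
      rw [Finset.sup'_lt_iff]
      intro i' hi'
      rw [Finset.lt_inf'_iff]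
      intro j' hj'
      exact key k i' hi' j' hj'
    have hak : a k = (((A k).sup' hne.1 v) + ((B k).inf' hne.2 v)) / 2 := dif_pos hne
    refine ⟨k, Finset.mem_Icc.2 ⟨hk1, hkw⟩, ?_, ?_⟩
    · have h1 : v i ≤ (A k).sup' hne.1 v := Finset.le_sup' v hiA
      rw [hak]; linarith
    · have h1 : (B k).inf' hne.2 v ≤ v j := Finset.inf'_le v hjB
      rw [hak]; linarith
  refine ⟨(Finset.Icc 1 (w - 1)).image a, ?_, ?_⟩
  · exact le_trans Finset.card_image_le (by simp [Nat.card_Icc])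
  · intro i j hij
    have : u j + 1 ≤ u i ∨ u i + 1 ≤ u j := by
      rcases abs_cases (u i - u j) with ⟨h1, _⟩ | ⟨h1, _⟩
      · left; linarith
      · right; linarith
    rcases this with h | h
    · obtain ⟨k, hk, h1, h2⟩ := main j i h
      exact ⟨a k, Finset.mem_image_of_mem a hk, Or.inr ⟨h1, h2⟩⟩
    · obtain ⟨k, hk, h1, h2⟩ := main i j h
      exact ⟨a k, Finset.mem_image_of_mem a hk, Or.inl ⟨h1, h2⟩⟩

theorem stmt4 (n : ℕ) (lay0 lay' : Fin n → ℝ × ℝ) (w h : ℕ)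
    (hw : 0 < w) (hh : 0 < h) (ε : ℝ) (hε0 : 0 < ε) (hε : ε < 1/2)
    (hdisj : disjointUnitLayout lay') (horth : orthOrder lay0 lay')
    (hW : unitWidth lay' ≤ (w : ℝ) + ε) (hH : unitHeight lay' ≤ (h : ℝ) + ε) :
    ∃ L : Finset ALine,
      (L.filter ALine.isVert).card ≤ w - 1 ∧
      (L.filter ALine.isHoriz).card ≤ h - 1 ∧
      ∀ i j : Fin n, lay0 i ≠ lay0 j → ∃ l ∈ L, l.hits (lay0 i) (lay0 j) := by
  rcases Nat.eq_zero_or_pos n with hn | hn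
  · subst hn
    exact ⟨∅, by simp, by simp, fun i j _ => i.elim0⟩
  · obtain ⟨Sx, hSxc, hSx⟩ := oneDim hn (fun i => (lay' i).1) (fun i => (lay0 i).1)
      (fun i j hij => ((horth i j).1).mpr hij) w ε hε hW
    obtain ⟨Sy, hSyc, hSy⟩ := oneDim hn (fun i => (lay' i).2) (fun i => (lay0 i).2)
      (fun i j hij => ((horth i j).2.2.1).mpr hij) h ε hε hH
    refine ⟨Sx.image ALine.vert ∪ Sy.image ALine.horiz, ?_, ?_, ?_⟩
    · have h1 : (Sx.image ALine.vert ∪ Sy.image ALine.horiz).filter ALine.isVert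
          ⊆ Sx.image ALine.vert := by
        intro l hl
        rcases Finset.mem_filter.1 hl with ⟨hm, hv⟩
        rcases Finset.mem_union.1 hm with hm | hm
        · exact hm
        · exfalso
          rcases Finset.mem_image.1 hm with ⟨b, _, rfl⟩
          exact hv
      exact le_trans (Finset.card_le_card h1) (le_trans Finset.card_image_le hSxc)
    · have h1 : (Sx.image ALine.vert ∪ Sy.image ALine.horiz).filter ALine.isHoriz
          ⊆ Sy.image ALine.horiz := by
        intro l hl
        rcases Finset.mem_filter.1 hl with ⟨hm, hv⟩
        rcases Finset.mem_union.1 hm with hm | hm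
        · exfalso
          rcases Finset.mem_image.1 hm with ⟨b, _, rfl⟩
          exact hv
        · exact hm
      exact le_trans (Finset.card_le_card h1) (le_trans Finset.card_image_le hSyc)
    · intro i j hij
      have hne : i ≠ j := fun e => hij (by rw [e])
      rcases hdisj i j hne with hd | hd
      · obtain ⟨aa, haS, hab⟩ := hSx i j hd
        exact ⟨ALine.vert aa,
          Finset.mem_union_left _ (Finset.mem_image_of_mem _ haS), hab⟩
      · obtain ⟨aa, haS, hab⟩ := hSy i j hd
        exact ⟨ALine.horiz aa,
          Finset.mem_union_right _ (Finset.mem_image_of_mem _ haS), hab⟩
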